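/- Let G be a locally finite connected infinite graph with one end, o a vertex, and suppose T is a spanning tree of G rooted at o with infinitely many ends (infinitely many pairwise disjoint infinite rays). Then for each n there is a radius R such that every minimal edge cutset of size at most n separating o from infinity contains an edge with an endpoint in the ball B_R(o). -/

import Mathlib

/-- `f` is an infinite (injective) ray. -/
def IsRay {V : Type*} (G : SimpleGraph V) (f : ℕ → V) : Prop :=
  Function.Injective f ∧ ∀ n, G.Adj (f n) (f (n + 1))

/-- The finite edge set `P` separates `o` from infinity. -/
def SepInf {V : Type*} (G : SimpleGraph V) (o : V) (P : Finset (Sym2 V)) : Prop :=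
  ∀ f : ℕ → V, IsRay G f → f 0 = o → ∃ n, s(f n, f (n + 1)) ∈ P

/-- `P` is a minimal edge cutset separating `o` from infinity. -/
def MinCutset {V : Type*} (G : SimpleGraph V) (o : V) (P : Finset (Sym2 V)) : Prop :=
  (P : Set (Sym2 V)) ⊆ G.edgeSet ∧ SepInf G o P ∧ ∀ Q ⊂ P, ¬ SepInf G o Q

/-!
Prefixing a shortest path from `o` to the start of a ray `f` of `G`, and shortcutting where
the two meet, gives a ray from `o` each of whose edges starts on that path or is an edge
of `f`. So a cutset separating `o` from infinity and avoiding the ball of radius `dist o (f 0)`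
contains an edge of `f`. With `R` the largest distance from `o` to the start of one of the first
`n + 1` disjoint rays of `T`, a cutset avoiding `B_R(o)` thus contains `n + 1` distinct edges,
one on each of these rays.
-/

section

variable {V : Type*} {G : SimpleGraph V}

namespace IsRay

variable {f : ℕ → V}

lemma mono {H : SimpleGraph V} (hGH : G ≤ H) (hf : IsRay G f) : IsRay H f :=
  ⟨hf.1, fun n => hGH (hf.2 n)⟩

lemma exists_ray_of_walk (hf : IsRay G f) {u : V} (p : G.Walk u (f 0)) :
    ∃ r, IsRay G r ∧ r 0 = u ∧
      ∀ m, r m ∈ p.support ∨ ∃ k, r m = f k ∧ r (m + 1) = f (k + 1) := by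
  generalize hv : f 0 = v at p
  induction p with
  | nil => exact ⟨f, hf, hv, fun m => .inr ⟨m, rfl, rfl⟩⟩
  | @cons u x _ hux p ih =>
    obtain ⟨r, hr, hr0, hrp⟩ := ih hv
    have hsupp := p.support_subset_support_cons hux
    by_cases hu : u ∈ Set.range r
    · obtain ⟨j, rfl⟩ := hu
      refine ⟨fun m => r (j + m), ⟨fun a b h => by simpa using hr.1 h, fun m => hr.2 (j + m)⟩,
        rfl, fun m => ?_⟩
      exact (hrp (j + m)).imp (@hsupp _) id
    · refine ⟨fun m => match m with | 0 => u | m + 1 => r m, ⟨?_, ?_⟩, rfl, ?_⟩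
      · rintro (_ | a) (_ | b) h
        · rfl
        · exact absurd ⟨b, h.symm⟩ hu
        · exact absurd ⟨a, h⟩ hu
        · exact congrArg (· + 1) (hr.1 h)
      · rintro (_ | m)
        · simpa [hr0] using hux
        · exact hr.2 m
      · rintro (_ | m)
        · exact .inl (SimpleGraph.Walk.start_mem_support _)
        · exact (hrp m).imp (@hsupp _) id

end IsRay

lemma SepInf.exists_edge_near_or_on_ray {o : V} {P : Finset (Sym2 V)} (hP : SepInf G o P)
    {f : ℕ → V} (hf : IsRay G f) (ho : G.Reachable o (f 0)) :
    ∃ e ∈ P, (∃ v ∈ e, G.dist o v ≤ G.dist o (f 0)) ∨ ∃ k, e = s(f k, f (k + 1)) := by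
  classical
  obtain ⟨p, hp⟩ := ho.exists_walk_length_eq_dist
  obtain ⟨r, hr, hr0, hrp⟩ := hf.exists_ray_of_walk p
  obtain ⟨m, hm⟩ := hP r hr hr0
  refine ⟨_, hm, ?_⟩
  rcases hrp m with hmp | ⟨k, hk, hk'⟩
  · refine .inl ⟨r m, Sym2.mem_mk_left _ _, ?_⟩
    calc G.dist o (r m) ≤ (p.takeUntil _ hmp).length := SimpleGraph.dist_le _
      _ ≤ p.length := p.length_takeUntil_le_length _
      _ = G.dist o (f 0) := hp
  · exact .inr ⟨k, by rw [hk, hk']⟩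

lemma card_le_card_of_disjoint_ranges {ι : Type*} {F : ι → ℕ → V}
    (hdisj : Pairwise fun i j => Disjoint (Set.range (F i)) (Set.range (F j)))
    (I : Finset ι) (P : Finset (Sym2 V)) (hP : ∀ i ∈ I, ∃ k, s(F i k, F i (k + 1)) ∈ P) :
    I.card ≤ P.card := by
  choose! k hk using hP
  refine Finset.card_le_card_of_injOn (fun i => s(F i (k i), F i (k i + 1))) hk ?_
  intro i _ j _ (hij : s(F i (k i), F i (k i + 1)) = s(F j (k j), F j (k j + 1)))
  by_contra hne
  have hmem : F i (k i) ∈ s(F j (k j), F j (k j + 1)) := hij ▸ Sym2.mem_mk_left _ _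
  rcases Sym2.mem_iff.1 hmem with h | h
  · exact Set.disjoint_left.1 (hdisj hne) ⟨k i, rfl⟩ ⟨k j, h.symm⟩
  · exact Set.disjoint_left.1 (hdisj hne) ⟨k i, rfl⟩ ⟨k j + 1, h.symm⟩

end

theorem stmt12_general {V : Type*} (G : SimpleGraph V)
    (hconn : G.Connected)
    (o : V) (T : SimpleGraph V) (hTsub : T ≤ G)
    (hrays : ∃ F : ℕ → ℕ → V, (∀ i, IsRay T (F i)) ∧
      Pairwise fun i j => Disjoint (Set.range (F i)) (Set.range (F j))) :
    ∀ n : ℕ, ∃ R : ℕ, ∀ P : Finset (Sym2 V), MinCutset G o P → P.card ≤ n →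
      ∃ e ∈ P, ∃ v ∈ e, G.dist o v ≤ R := by
  obtain ⟨F, hF, hdisj⟩ := hrays
  intro n
  set R := (Finset.range (n + 1)).sup fun i => G.dist o (F i 0)
  refine ⟨R, fun P hP hcard => ?_⟩
  by_contra! hfar
  have hcut : ∀ i ∈ Finset.range (n + 1), ∃ k, s(F i k, F i (k + 1)) ∈ P := by
    intro i hi
    obtain ⟨e, he, ⟨v, hv, hdist⟩ | ⟨k, rfl⟩⟩ :=
      hP.2.1.exists_edge_near_or_on_ray ((hF i).mono hTsub) (hconn o (F i 0))
    · have hR : G.dist o (F i 0) ≤ R := Finset.le_sup (f := fun i => G.dist o (F i 0)) hi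
      exact absurd (hdist.trans hR) (hfar e he v hv).not_ge
    · exact ⟨k, he⟩
  have := card_le_card_of_disjoint_ranges hdisj _ P hcut
  rw [Finset.card_range] at this
  omega

/-- let `G` be a one-ended locally finite connected infinite graph, and
`T` a spanning tree rooted at `o` with infinitely many pairwise vertex-disjoint rays.
Then for each `n` there is `R` such that every minimal cutset of size at most `n`
separating `o` from infinity has an edge with an endpoint in the ball `B_R(o)`. -/
theorem stmt12 {V : Type*} (G : SimpleGraph V) [∀ v, Fintype (G.neighborSet v)]
    (hconn : G.Connected) (hinf : Infinite V)
    (hone : Nat.card G.end = 1)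
    (o : V) (T : SimpleGraph V) (hTsub : T ≤ G)
    (hTconn : T.Connected) (hTac : T.IsAcyclic)
    (hrays : ∃ F : ℕ → ℕ → V, (∀ i, IsRay T (F i)) ∧
      Pairwise fun i j => Disjoint (Set.range (F i)) (Set.range (F j))) :
    ∀ n : ℕ, ∃ R : ℕ, ∀ P : Finset (Sym2 V), MinCutset G o P → P.card ≤ n →
      ∃ e ∈ P, ∃ v ∈ e, G.dist o v ≤ R :=
  stmt12_general G hconn o T hTsub hrays
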